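/- arXiv:2003.01546 — 8 statements merged into one kernel-verified Lean document; each statement's English description precedes it below -/
import Mathlib

section
/- Let ν ≥ 1, β ∈ (0,1], and let μ > 0, μ̃ > 0, τ > 0, κ > 0 be real numbers satisfying μ·μ̃ ≥ 1. Define μᵉ := (ν·μ + τ·κ)/(ν + 1). If β·μᵉ ≤ τ·κ and β·μᵉ·μ̃ ≤ 1, then μ/(2 − β) ≤ μᵉ ≤ μ/β. -/
/-!
Write `μᵉ = (ν μ + τ κ)/(ν + 1)`. The upper bound is the chain `β μᵉ μ̃ ≤ 1 ≤ μ μ̃`.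
For the lower bound, `β μᵉ ≤ τ κ = (ν + 1) μᵉ - ν μ` gives `ν μ ≤ (ν + 1 - β) μᵉ`, and
`ν + 1 - β ≤ ν (2 - β)` because `(ν - 1)(1 - β) ≥ 0`.
-/

noncomputable def extendedComplementarity (ν μ τ κ : ℝ) : ℝ := (ν * μ + τ * κ) / (ν + 1)

lemma le_two_sub_mul_extendedComplementarity {ν β μ τ κ : ℝ} (hν : 1 ≤ ν) (hβ : β ≤ 1)
    (hμ : 0 ≤ μ) (hA : β * extendedComplementarity ν μ τ κ ≤ τ * κ) :
    μ ≤ (2 - β) * extendedComplementarity ν μ τ κ := by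
  set e := extendedComplementarity ν μ τ κ
  have hmul : e * (ν + 1) = ν * μ + τ * κ := div_mul_cancel₀ _ (by linarith)
  have hkey : ν * μ ≤ (ν + 1 - β) * e := by linarith
  have he0 : 0 ≤ e :=
    nonneg_of_mul_nonneg_right ((mul_nonneg (by linarith) hμ).trans hkey) (by linarith)
  have hslack : 0 ≤ (ν - 1) * (1 - β) * e := by
    have := sub_nonneg.2 hν; have := sub_nonneg.2 hβ; positivity
  refine le_of_mul_le_mul_left ?_ (by linarith : (0 : ℝ) < ν)
  linarith

theorem stmt2_general (ν β μ μt τ κ : ℝ) (hν : 1 ≤ ν) (hβ0 : 0 < β) (hβ1 : β ≤ 1)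
    (hμ : 0 < μ) (hμt : 0 < μt)
    (hNT : 1 ≤ μ * μt)
    (hA : β * ((ν * μ + τ * κ) / (ν + 1)) ≤ τ * κ)
    (hB : β * ((ν * μ + τ * κ) / (ν + 1)) * μt ≤ 1) :
    μ / (2 - β) ≤ (ν * μ + τ * κ) / (ν + 1) ∧
    (ν * μ + τ * κ) / (ν + 1) ≤ μ / β :=
  ⟨(div_le_iff₀' (by linarith)).2 (le_two_sub_mul_extendedComplementarity hν hβ1 hμ.le hA),
    (le_div_iff₀' hβ0).2 (le_of_mul_le_mul_right (hB.trans hNT) hμt)⟩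

/-- Bounds on the extended complementarity parameter `μᵉ = (ν μ + τ κ)/(ν + 1)`:
if `β μᵉ ≤ τ κ` and `β μᵉ μ̃ ≤ 1`, then `μ/(2 − β) ≤ μᵉ ≤ μ/β`. -/
theorem stmt2 (ν β μ μt τ κ : ℝ) (hν : 1 ≤ ν) (hβ0 : 0 < β) (hβ1 : β ≤ 1)
    (hμ : 0 < μ) (hμt : 0 < μt) (hτ : 0 < τ) (hκ : 0 < κ)
    (hNT : 1 ≤ μ * μt)
    (hA : β * ((ν * μ + τ * κ) / (ν + 1)) ≤ τ * κ)
    (hB : β * ((ν * μ + τ * κ) / (ν + 1)) * μt ≤ 1) :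
    μ / (2 - β) ≤ (ν * μ + τ * κ) / (ν + 1) ∧
    (ν * μ + τ * κ) / (ν + 1) ≤ μ / β :=
  stmt2_general ν β μ μt τ κ hν hβ0 hβ1 hμ hμt hNT hA hB
end

section
/- In the homogeneous-model setting, suppose W is a symmetric n×n matrix with W·x = s, s̃ ∈ ℝⁿ satisfies ⟨x, s̃⟩ = ν where ν ≥ 1, τ, κ > 0, and μᵉ := (⟨x,s⟩ + τ·κ)/(ν + 1). Suppose Δz^aff = (Δy^aff, Δx^aff, Δτ^aff, Δs^aff, Δκ^aff) satisfies G(Δz^aff) = −G(z), τ·Δκ^aff + κ·Δτ^aff = −τ·κ, and W·Δx^aff + Δs^aff = −s, and Δz^cen satisfies G(Δz^cen) = G(z), τ·Δκ^cen + κ·Δτ^cen = μᵉ, and W·Δx^cen + Δs^cen = μᵉ·s̃. Let γ ∈ ℝ and Δz^pred := Δz^aff + γ·Δz^cen. Then ⟨Δx^pred, Δs^pred⟩ + Δτ^pred·Δκ^pred = 0. -/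
open Matrix

/-- The residual map of the homogeneous self-dual model:
`G(y, x, τ, s, κ) = (A x − τ b, −Aᵀ y + τ c − s, ⟨b,y⟩ − ⟨c,x⟩ − κ)`. -/
def Gres {m n : ℕ} (A : Matrix (Fin m) (Fin n) ℝ) (b : Fin m → ℝ) (c : Fin n → ℝ)
    (y : Fin m → ℝ) (x : Fin n → ℝ) (τ : ℝ) (s : Fin n → ℝ) (κ : ℝ) :
    (Fin m → ℝ) × (Fin n → ℝ) × ℝ :=
  (A *ᵥ x - τ • b, -(Aᵀ *ᵥ y) + τ • c - s, b ⬝ᵥ y - c ⬝ᵥ x - κ)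

/-- Fundamental skew-symmetry identity for the residual map. -/
lemma keyA {m n : ℕ} (A : Matrix (Fin m) (Fin n) ℝ) (b : Fin m → ℝ) (c : Fin n → ℝ)
    (y1 : Fin m → ℝ) (x1 : Fin n → ℝ) (τ1 : ℝ) (s1 : Fin n → ℝ) (κ1 : ℝ)
    (y2 : Fin m → ℝ) (x2 : Fin n → ℝ) (τ2 : ℝ) (s2 : Fin n → ℝ) (κ2 : ℝ) :
    x1 ⬝ᵥ s2 + x2 ⬝ᵥ s1 + τ1 * κ2 + τ2 * κ1 =
      -((A *ᵥ x1 - τ1 • b) ⬝ᵥ y2 + x2 ⬝ᵥ (-(Aᵀ *ᵥ y1) + τ1 • c - s1)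
          + τ2 * (b ⬝ᵥ y1 - c ⬝ᵥ x1 - κ1))
      - ((A *ᵥ x2 - τ2 • b) ⬝ᵥ y1 + x1 ⬝ᵥ (-(Aᵀ *ᵥ y2) + τ2 • c - s2)
          + τ1 * (b ⬝ᵥ y2 - c ⬝ᵥ x2 - κ2)) := by
  simp only [dotProduct_sub, sub_dotProduct, dotProduct_add, add_dotProduct,
    dotProduct_neg, neg_dotProduct, dotProduct_smul, smul_dotProduct, smul_eq_mul,
    dotProduct_mulVec, vecMul_transpose, dotProduct_comm (A *ᵥ x1) y2,
    dotProduct_comm (A *ᵥ x2) y1, dotProduct_comm b y1, dotProduct_comm b y2,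
    dotProduct_comm c x1, dotProduct_comm c x2]
  ring

/-- The predictor direction satisfies `⟨Δx, Δs⟩ + Δτ Δκ = 0`. -/
theorem stmt5 {m n : ℕ} (A : Matrix (Fin m) (Fin n) ℝ) (b : Fin m → ℝ) (c : Fin n → ℝ)
    (ν : ℝ) (hν : 1 ≤ ν)
    (y : Fin m → ℝ) (x : Fin n → ℝ) (τ : ℝ) (s : Fin n → ℝ) (κ : ℝ)
    (st : Fin n → ℝ) (W : Matrix (Fin n) (Fin n) ℝ)
    (hWsymm : W.IsSymm) (hWx : W *ᵥ x = s) (hxst : x ⬝ᵥ st = ν)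
    (hτ : 0 < τ) (hκ : 0 < κ)
    (μe : ℝ) (hμe : μe = (x ⬝ᵥ s + τ * κ) / (ν + 1))
    (Δya : Fin m → ℝ) (Δxa : Fin n → ℝ) (Δτa : ℝ) (Δsa : Fin n → ℝ) (Δκa : ℝ)
    (Δyc : Fin m → ℝ) (Δxc : Fin n → ℝ) (Δτc : ℝ) (Δsc : Fin n → ℝ) (Δκc : ℝ)
    (haffG : Gres A b c Δya Δxa Δτa Δsa Δκa = -Gres A b c y x τ s κ)
    (haffτκ : τ * Δκa + κ * Δτa = -(τ * κ))
    (haffxs : W *ᵥ Δxa + Δsa = -s)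
    (hcenG : Gres A b c Δyc Δxc Δτc Δsc Δκc = Gres A b c y x τ s κ)
    (hcenτκ : τ * Δκc + κ * Δτc = μe)
    (hcenxs : W *ᵥ Δxc + Δsc = μe • st)
    (γ : ℝ) :
    (Δxa + γ • Δxc) ⬝ᵥ (Δsa + γ • Δsc) + (Δτa + γ * Δτc) * (Δκa + γ * Δκc) = 0 := by
  simp only [Gres, Prod.mk.injEq, Prod.neg_mk] at haffG hcenG
  obtain ⟨ha1, ha2, ha3⟩ := haffG
  obtain ⟨hc1, hc2, hc3⟩ := hcenG
  -- `x ⬝ᵥ W *ᵥ v = s ⬝ᵥ v` for any `v`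
  have hxW : ∀ v : Fin n → ℝ, x ⬝ᵥ (W *ᵥ v) = s ⬝ᵥ v := by
    intro v
    rw [dotProduct_mulVec, ← hWsymm, vecMul_transpose, hWx]
  have hWa : Δxa ⬝ᵥ s + x ⬝ᵥ Δsa = -(x ⬝ᵥ s) := by
    have h := congrArg (fun v => x ⬝ᵥ v) haffxs
    simp only [dotProduct_add, dotProduct_neg, hxW] at h
    rw [dotProduct_comm Δxa s]
    linarith
  have hWc : Δxc ⬝ᵥ s + x ⬝ᵥ Δsc = μe * ν := by
    have h := congrArg (fun v => x ⬝ᵥ v) hcenxs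
    simp only [dotProduct_add, dotProduct_smul, smul_eq_mul, hxW, hxst] at h
    rw [dotProduct_comm Δxc s]
    linarith
  have hν1 : ν + 1 ≠ 0 := by linarith
  have hμ : μe * (ν + 1) = x ⬝ᵥ s + τ * κ := by
    rw [hμe, div_mul_cancel₀ _ hν1]
  have hkz := keyA A b c y x τ s κ y x τ s κ
  have hka := keyA A b c y x τ s κ Δya Δxa Δτa Δsa Δκa
  have hkc := keyA A b c y x τ s κ Δyc Δxc Δτc Δsc Δκc
  have hkaa := keyA A b c Δya Δxa Δτa Δsa Δκa Δya Δxa Δτa Δsa Δκa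
  have hkcc := keyA A b c Δyc Δxc Δτc Δsc Δκc Δyc Δxc Δτc Δsc Δκc
  have hkac := keyA A b c Δya Δxa Δτa Δsa Δκa Δyc Δxc Δτc Δsc Δκc
  rw [ha1, ha2, ha3] at hka hkaa hkac
  rw [hc1, hc2, hc3] at hkc hkcc hkac
  simp only [neg_dotProduct, dotProduct_neg, mul_neg, neg_neg] at hka hkc hkaa hkcc hkac
  have hEa : (A *ᵥ x - τ • b) ⬝ᵥ Δya + Δxa ⬝ᵥ (-(Aᵀ *ᵥ y) + τ • c - s)
      + Δτa * (b ⬝ᵥ y - c ⬝ᵥ x - κ) = 0 := by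
    linear_combination hka - hWa - haffτκ + hkz / 2
  have hEc : (A *ᵥ x - τ • b) ⬝ᵥ Δyc + Δxc ⬝ᵥ (-(Aᵀ *ᵥ y) + τ • c - s)
      + Δτc * (b ⬝ᵥ y - c ⬝ᵥ x - κ) = 0 := by
    linear_combination hkc - hWc - hcenτκ - hμ - hkz / 2
  simp only [dotProduct_add, add_dotProduct, dotProduct_smul, smul_dotProduct, smul_eq_mul]
  linear_combination hkaa / 2 + γ * hkac + (γ ^ 2 / 2) * hkcc
    + (1 - γ) * hEa + (γ - γ ^ 2) * hEc
end

section
/- In the homogeneous-model setting, suppose W is a symmetric n×n matrix with W·x = s, s̃ ∈ ℝⁿ satisfies ⟨x, s̃⟩ = ν where ν ≥ 1, τ, κ > 0, and μᵉ := (⟨x,s⟩ + τ·κ)/(ν + 1). Suppose Δz^aff satisfies G(Δz^aff) = −G(z), τ·Δκ^aff + κ·Δτ^aff = −τ·κ, and W·Δx^aff + Δs^aff = −s, and Δz^cen satisfies G(Δz^cen) = G(z), τ·Δκ^cen + κ·Δτ^cen = μᵉ, and W·Δx^cen + Δs^cen = μᵉ·s̃. Let α, γ ∈ ℝ and Δz^pred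 := Δz^aff + γ·Δz^cen. Then ⟨x + α·Δx^pred, s + α·Δs^pred⟩ + (τ + α·Δτ^pred)·(κ + α·Δκ^pred) = (1 − α·(1 − γ))·(⟨x,s⟩ + τ·κ). -/
open Matrix

/-- Orthogonality-type identity: if a direction `Δz` satisfies `G(Δz) = θ G(z)`
(written componentwise), then the bilinear form `⟨Δx,Δs⟩ + Δτ Δκ` equals
`θ (⟨x,Δs⟩ + ⟨Δx,s⟩ + τΔκ + κΔτ) − θ² (⟨x,s⟩ + τκ)`. -/
lemma key {m n : ℕ} (A : Matrix (Fin m) (Fin n) ℝ) (b : Fin m → ℝ) (c : Fin n → ℝ)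
    (y Δy : Fin m → ℝ) (x s Δx Δs : Fin n → ℝ) (τ κ θ Δτ Δκ : ℝ)
    (h1 : A *ᵥ Δx - Δτ • b = θ • (A *ᵥ x - τ • b))
    (h2 : -(Aᵀ *ᵥ Δy) + Δτ • c - Δs = θ • (-(Aᵀ *ᵥ y) + τ • c - s))
    (h3 : b ⬝ᵥ Δy - c ⬝ᵥ Δx - Δκ = θ * (b ⬝ᵥ y - c ⬝ᵥ x - κ)) :
    Δx ⬝ᵥ Δs + Δτ * Δκ
      = θ * (x ⬝ᵥ Δs + Δx ⬝ᵥ s + τ * Δκ + κ * Δτ) - θ^2 * (x ⬝ᵥ s + τ * κ) := by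
  have h1y := congrArg (fun v => y ⬝ᵥ v) h1
  have h1dy := congrArg (fun v => Δy ⬝ᵥ v) h1
  have h2x := congrArg (fun v => x ⬝ᵥ v) h2
  have h2dx := congrArg (fun v => Δx ⬝ᵥ v) h2
  simp only [Matrix.mulVec_transpose, Matrix.dotProduct_mulVec, dotProduct_add,
    dotProduct_sub, dotProduct_neg, dotProduct_smul, smul_eq_mul, dotProduct_comm] at h1y h1dy h2x h2dx h3 ⊢
  linear_combination θ*h1y - h1dy + θ*h2x - h2dx + (θ*τ - Δτ)*h3

/-- Complementarity after a predictor step of size `α`: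
`⟨x₊, s₊⟩ + τ₊ κ₊ = (1 − α(1 − γ)) (⟨x,s⟩ + τκ)`. -/
theorem stmt6 {m n : ℕ} (A : Matrix (Fin m) (Fin n) ℝ) (b : Fin m → ℝ) (c : Fin n → ℝ)
    (ν : ℝ) (hν : 1 ≤ ν)
    (y : Fin m → ℝ) (x : Fin n → ℝ) (τ : ℝ) (s : Fin n → ℝ) (κ : ℝ)
    (st : Fin n → ℝ) (W : Matrix (Fin n) (Fin n) ℝ)
    (hWsymm : W.IsSymm) (hWx : W *ᵥ x = s) (hxst : x ⬝ᵥ st = ν)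
    (hτ : 0 < τ) (hκ : 0 < κ)
    (μe : ℝ) (hμe : μe = (x ⬝ᵥ s + τ * κ) / (ν + 1))
    (Δya : Fin m → ℝ) (Δxa : Fin n → ℝ) (Δτa : ℝ) (Δsa : Fin n → ℝ) (Δκa : ℝ)
    (Δyc : Fin m → ℝ) (Δxc : Fin n → ℝ) (Δτc : ℝ) (Δsc : Fin n → ℝ) (Δκc : ℝ)
    (haffG : Gres A b c Δya Δxa Δτa Δsa Δκa = -Gres A b c y x τ s κ)
    (haffτκ : τ * Δκa + κ * Δτa = -(τ * κ))
    (haffxs : W *ᵥ Δxa + Δsa = -s)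
    (hcenG : Gres A b c Δyc Δxc Δτc Δsc Δκc = Gres A b c y x τ s κ)
    (hcenτκ : τ * Δκc + κ * Δτc = μe)
    (hcenxs : W *ᵥ Δxc + Δsc = μe • st)
    (α γ : ℝ) :
    (x + α • (Δxa + γ • Δxc)) ⬝ᵥ (s + α • (Δsa + γ • Δsc))
        + (τ + α * (Δτa + γ * Δτc)) * (κ + α * (Δκa + γ * Δκc))
      = (1 - α * (1 - γ)) * (x ⬝ᵥ s + τ * κ) := by
  simp only [Gres, Prod.ext_iff, Prod.fst_neg, Prod.snd_neg, Prod.neg_mk] at haffG hcenG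
  obtain ⟨ha1, ha2, ha3⟩ := haffG
  obtain ⟨hc1, hc2, hc3⟩ := hcenG
  have P1 : A *ᵥ (Δxa + γ • Δxc) - (Δτa + γ * Δτc) • b
      = (γ - 1) • (A *ᵥ x - τ • b) := by
    rw [Matrix.mulVec_add, Matrix.mulVec_smul]
    linear_combination (norm := module) ha1 + γ • hc1
  have P2 : -(Aᵀ *ᵥ (Δya + γ • Δyc)) + (Δτa + γ * Δτc) • c - (Δsa + γ • Δsc)
      = (γ - 1) • (-(Aᵀ *ᵥ y) + τ • c - s) := by
    rw [Matrix.mulVec_add, Matrix.mulVec_smul]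
    linear_combination (norm := module) ha2 + γ • hc2
  have P3 : b ⬝ᵥ (Δya + γ • Δyc) - c ⬝ᵥ (Δxa + γ • Δxc) - (Δκa + γ * Δκc)
      = (γ - 1) * (b ⬝ᵥ y - c ⬝ᵥ x - κ) := by
    simp only [dotProduct_add, dotProduct_smul, smul_eq_mul]
    linear_combination ha3 + γ * hc3
  have hkey := key A b c y (Δya + γ • Δyc) x s (Δxa + γ • Δxc) (Δsa + γ • Δsc)
    τ κ (γ - 1) (Δτa + γ * Δτc) (Δκa + γ * Δκc) P1 P2 P3
  have hxW : x ᵥ* W = s := by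
    rw [← Matrix.mulVec_transpose, hWsymm.eq, hWx]
  have ea := congrArg (fun v => x ⬝ᵥ v) haffxs
  have ec := congrArg (fun v => x ⬝ᵥ v) hcenxs
  simp only [dotProduct_add, Matrix.dotProduct_mulVec, hxW, dotProduct_neg,
    dotProduct_smul, smul_eq_mul, hxst, dotProduct_comm] at ea ec
  have hne : ν + 1 ≠ 0 := by linarith
  have hμν : μe * (ν + 1) = x ⬝ᵥ s + τ * κ := by
    rw [hμe]; field_simp
  simp only [dotProduct_add, add_dotProduct, dotProduct_smul, smul_dotProduct,
    smul_eq_mul, dotProduct_comm] at hkey ⊢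
  linear_combination α^2 * hkey
    + (α + α^2*(γ-1)) * (ea + γ * ec + haffτκ + γ * hcenτκ)
    + (α + α^2*(γ-1)) * γ * hμν
end

section
/- In the predictor setting, ‖Δx‖_W² + (‖Δs‖_W*)² ≤ μᵉ·θ, where θ := ν·(1 − 2γ + γ²/β) + 1 − β/2 + γ²/(2β) − γ. -/
open Matrix

/-- The norm induced by a (positive definite) matrix `P`: `‖v‖_P = √(vᵀ P v)`. -/
noncomputable def vnorm {n : ℕ} (P : Matrix (Fin n) (Fin n) ℝ) (v : Fin n → ℝ) : ℝ :=
  Real.sqrt (v ⬝ᵥ (P *ᵥ v))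

/-- The operator norm `‖Q‖_P = sup {‖Q u‖_{P⁻¹} : ‖u‖_P ≤ 1}`. -/
noncomputable def opNorm {n : ℕ} (P Q : Matrix (Fin n) (Fin n) ℝ) : ℝ :=
  sSup ((fun u => vnorm P⁻¹ (Q *ᵥ u)) '' {u : Fin n → ℝ | vnorm P u ≤ 1})

/-- The Loewner order: `Loewner P Q` means `P ⪯ Q`, i.e. `Q - P` is positive semidefinite. -/
def Loewner {n : ℕ} (P Q : Matrix (Fin n) (Fin n) ℝ) : Prop :=
  (Q - P).PosSemidef

lemma aux_div_bound (T c D E : ℝ) (hT : 0 < T)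
    (h1 : 4 * T * D ≤ (T - c) ^ 2) (h2 : c ^ 2 ≤ 2 * E * T) :
    2 * D ≤ T / 2 - c + E := by
  have h2T : 0 < 2 * T := by linarith
  have h3 : 2 * D ≤ (T ^ 2 - 2 * T * c + 2 * E * T) / (2 * T) := by
    rw [le_div_iff₀ h2T]; nlinarith
  calc 2 * D ≤ (T ^ 2 - 2 * T * c + 2 * E * T) / (2 * T) := h3
    _ = T / 2 - c + E := by field_simp

set_option maxHeartbeats 2000000 in
/-- Predictor norm bound: `‖Δx‖_W² + (‖Δs‖_W*)² ≤ μᵉ θ`. -/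
theorem stmt8 {n : ℕ}
    (ν β γ : ℝ) (hν : 1 ≤ ν) (hβ0 : 0 < β) (hβ1 : β ≤ 1)
    (x s xt st Δx Δs : Fin n → ℝ) (τ κ Δτ Δκ : ℝ) (hτ : 0 < τ) (hκ : 0 < κ)
    (W : Matrix (Fin n) (Fin n) ℝ) (hWsymm : W.IsSymm) (hWpd : W.PosDef)
    (hWx : W *ᵥ x = s) (hWxt : W *ᵥ xt = st) (hxst : x ⬝ᵥ st = ν)
    (μe : ℝ) (hμe : μe = (x ⬝ᵥ s + τ * κ) / (ν + 1))
    (hN1 : β * μe ≤ τ * κ) (hN2 : β * μe * (xt ⬝ᵥ st) ≤ ν)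
    (hdir1 : W *ᵥ Δx + Δs = -s + (γ * μe) • st)
    (hdir2 : τ * Δκ + κ * Δτ = -(τ * κ) + γ * μe)
    (hdir3 : Δx ⬝ᵥ Δs + Δτ * Δκ = 0)
    (θ : ℝ) (hθ : θ = ν * (1 - 2 * γ + γ ^ 2 / β) + 1 - β / 2 + γ ^ 2 / (2 * β) - γ)
 :
    vnorm W Δx ^ 2 + vnorm W⁻¹ Δs ^ 2 ≤ μe * θ := by
  have hdet : IsUnit W.det := hWpd.det_pos.ne'.isUnit
  have hWiW : W⁻¹ * W = 1 := Matrix.nonsing_inv_mul W hdet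
  have hWipd : W⁻¹.PosDef := hWpd.inv
  -- quadratic forms are nonneg
  have hq : ∀ (M : Matrix (Fin n) (Fin n) ℝ), M.PosSemidef → ∀ v, 0 ≤ v ⬝ᵥ (M *ᵥ v) := by
    intro M hM v
    simpa using hM.re_dotProduct_nonneg v
  have hvx : vnorm W Δx ^ 2 = Δx ⬝ᵥ (W *ᵥ Δx) := by
    simp only [vnorm]; exact Real.sq_sqrt (hq W hWpd.posSemidef Δx)
  have hvs : vnorm W⁻¹ Δs ^ 2 = Δs ⬝ᵥ (W⁻¹ *ᵥ Δs) := by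
    simp only [vnorm]; exact Real.sq_sqrt (hq _ hWipd.posSemidef Δs)
  -- symmetry of dot products with W
  have hsym : ∀ u w : Fin n → ℝ, (W *ᵥ u) ⬝ᵥ w = u ⬝ᵥ (W *ᵥ w) := by
    intro u w
    rw [dotProduct_comm, Matrix.dotProduct_mulVec, ← Matrix.mulVec_transpose,
      show Wᵀ = W from hWsymm, dotProduct_comm]
  have hWix : W⁻¹ *ᵥ s = x := by rw [← hWx, Matrix.mulVec_mulVec, hWiW, Matrix.one_mulVec]
  have hWixt : W⁻¹ *ᵥ st = xt := by rw [← hWxt, Matrix.mulVec_mulVec, hWiW, Matrix.one_mulVec]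
  have hΔs : Δs = -s + (γ * μe) • st - W *ᵥ Δx := by rw [← hdir1]; abel
  have hWiΔs : W⁻¹ *ᵥ Δs = -x + (γ * μe) • xt - Δx := by
    rw [hΔs]
    simp [Matrix.mulVec_add, Matrix.mulVec_sub, Matrix.mulVec_neg, Matrix.mulVec_smul,
      hWix, hWixt, Matrix.mulVec_mulVec, hWiW, Matrix.one_mulVec]
  -- key algebraic identity
  have hsxt : s ⬝ᵥ xt = ν := by rw [← hWx, hsym, hWxt, hxst]
  have key : Δx ⬝ᵥ (W *ᵥ Δx) + Δs ⬝ᵥ (W⁻¹ *ᵥ Δs)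
      = x ⬝ᵥ s - 2 * (γ * μe) * ν + (γ * μe) ^ 2 * (xt ⬝ᵥ st) - 2 * (Δx ⬝ᵥ Δs) := by
    have e1 : Δs ⬝ᵥ (W⁻¹ *ᵥ Δs)
        = (-s + (γ * μe) • st - W *ᵥ Δx) ⬝ᵥ (-x + (γ * μe) • xt - Δx) := by
      rw [← hΔs, ← hWiΔs]
    have e2 : Δx ⬝ᵥ Δs = Δx ⬝ᵥ (-s + (γ * μe) • st - W *ᵥ Δx) := by rw [← hΔs]
    rw [e1, e2]
    have h1 : (W *ᵥ Δx) ⬝ᵥ x = Δx ⬝ᵥ s := by rw [hsym, hWx]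
    have h2 : (W *ᵥ Δx) ⬝ᵥ xt = Δx ⬝ᵥ st := by rw [hsym, hWxt]
    have h3 : (W *ᵥ Δx) ⬝ᵥ Δx = Δx ⬝ᵥ (W *ᵥ Δx) := by rw [hsym]
    have h4 : s ⬝ᵥ x = x ⬝ᵥ s := dotProduct_comm _ _
    have h5 : st ⬝ᵥ x = x ⬝ᵥ st := dotProduct_comm _ _
    have h6 : st ⬝ᵥ xt = xt ⬝ᵥ st := dotProduct_comm _ _
    have h7 : s ⬝ᵥ Δx = Δx ⬝ᵥ s := dotProduct_comm _ _
    have h8 : st ⬝ᵥ Δx = Δx ⬝ᵥ st := dotProduct_comm _ _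
    simp only [sub_dotProduct, dotProduct_sub, add_dotProduct, dotProduct_add,
      neg_dotProduct, dotProduct_neg, smul_dotProduct, dotProduct_smul, smul_eq_mul,
      h1, h2, h3, h4, h5, h6, h7, h8, hsxt, hxst]
    ring
  -- positivity facts
  have hxs0 : 0 ≤ x ⬝ᵥ s := by rw [← hWx]; exact hq W hWpd.posSemidef x
  have hP0 : 0 ≤ xt ⬝ᵥ st := by rw [← hWxt]; exact hq W hWpd.posSemidef xt
  have hμ0 : 0 < μe := by
    rw [hμe]
    apply div_pos (by nlinarith [mul_pos hτ hκ]) (by linarith)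
  have hT0 : 0 < τ * κ := mul_pos hτ hκ
  have hsum : x ⬝ᵥ s + τ * κ = (ν + 1) * μe := by rw [hμe]; field_simp
  -- bound on 2 Δτ Δκ
  have hDb : 2 * (Δτ * Δκ) ≤ τ * κ / 2 - γ * μe + γ ^ 2 * μe / (2 * β) := by
    have hE2 : 2 * (γ ^ 2 * μe / (2 * β)) * (β * μe) = (γ * μe) ^ 2 := by
      field_simp
    have hE0 : 0 ≤ γ ^ 2 * μe / (2 * β) := by positivity
    have hc2 : (γ * μe) ^ 2 ≤ 2 * (γ ^ 2 * μe / (2 * β)) * (τ * κ) := by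
      rw [← hE2]
      exact mul_le_mul_of_nonneg_left hN1 (by positivity)
    have hsq : (τ * κ - γ * μe) ^ 2 = (τ * Δκ + κ * Δτ) ^ 2 := by
      rw [hdir2]; ring
    have h4 : 4 * (τ * κ) * (Δτ * Δκ) ≤ (τ * κ - γ * μe) ^ 2 := by
      rw [hsq]; nlinarith [sq_nonneg (τ * Δκ - κ * Δτ)]
    exact aux_div_bound (τ * κ) (γ * μe) (Δτ * Δκ) (γ ^ 2 * μe / (2 * β)) hT0 h4 hc2
  -- bound on c^2 * (xt ⬝ᵥ st)
  have hPb : (γ * μe) ^ 2 * (xt ⬝ᵥ st) ≤ γ ^ 2 * ν * μe / β := by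
    have hb : γ ^ 2 * μe / β * (β * μe * (xt ⬝ᵥ st)) = (γ * μe) ^ 2 * (xt ⬝ᵥ st) := by
      field_simp
    calc (γ * μe) ^ 2 * (xt ⬝ᵥ st) = γ ^ 2 * μe / β * (β * μe * (xt ⬝ᵥ st)) := hb.symm
      _ ≤ γ ^ 2 * μe / β * ν := mul_le_mul_of_nonneg_left hN2 (by positivity)
      _ = γ ^ 2 * ν * μe / β := by ring
  -- final assembly
  have hθ' : μe * θ = μe * ν - 2 * γ * ν * μe + γ ^ 2 * ν * μe / β + μe - β * μe / 2
      + γ ^ 2 * μe / (2 * β) - γ * μe := by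
    rw [hθ]; field_simp
  have hD3 : Δx ⬝ᵥ Δs = -(Δτ * Δκ) := by linarith [hdir3]
  rw [hvx, hvs, key, hD3]
  have hTβ : -(τ * κ / 2) ≤ -(β * μe / 2) := by linarith
  linarith [hDb, hPb, hsum, hTβ, hθ']
end

section
/- In the predictor setting, assume additionally that μ > 0, that ⟨x,s⟩·⟨x̃,s̃⟩ ≥ ν², and that A and B are symmetric positive definite n×n matrices and lP, uD > 0 are reals with lP·μ·A ⪯ W and W ⪯ (uD/μ)·B⁻¹ in the Loewner order. Then lP·‖Δx‖_A² + (1/uD)·‖Δs‖_B² ≤ θ/β, where θ := ν·(1 − 2γ + γ²/β) + 1 − β/2 + γ²/(2β) − γ and ‖v‖_M := √(vᵀMv). -/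
/-!
Put `S = Δxᵀ W Δx + Δsᵀ W⁻¹ Δs`. The Loewner bounds give `μ (lP ‖Δx‖_A² + ‖Δs‖_B² / uD) ≤ S`,
the `Δs` part through the antitonicity of inversion, which follows from the variational formula
`vᵀ W⁻¹ v = sup_u (2 uᵀ v - uᵀ W u)`. Expanding `‖W Δx + Δs‖²_{W⁻¹}` and using
`⟨Δx, Δs⟩ = -Δτ Δκ` gives `S = ⟨x, s⟩ - 2 γ μᵉ ν + (γ μᵉ)² ⟨x̃, s̃⟩ + 2 Δτ Δκ`, and AM-GM on
`τ Δκ + κ Δτ = γ μᵉ - τ κ` bounds `2 Δτ Δκ` by `(γ μᵉ - τ κ)² / (2 τ κ)`. With the neighbourhood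
conditions, `S` is at most an affine function of `μᵉ`, and the neighbourhood together with the
Nesterov-Todd inequality confine `μᵉ` to `[ν μ / (ν + 1 - β), μ / β]`; at both endpoints the
bound is at most `μ θ / β`.
-/

open Matrix

namespace Matrix

variable {ι : Type*} [Fintype ι]

lemma IsHermitian.mulVec_dotProduct {P : Matrix ι ι ℝ} (hP : P.IsHermitian) (u v : ι → ℝ) :
    P *ᵥ u ⬝ᵥ v = u ⬝ᵥ P *ᵥ v := by
  rw [dotProduct_mulVec, ← mulVec_transpose, ← conjTranspose_eq_transpose_of_trivial, hP.eq]

variable [DecidableEq ι] {P : Matrix ι ι ℝ}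

lemma PosDef.mulVec_inv_mulVec (hP : P.PosDef) (v : ι → ℝ) : P *ᵥ (P⁻¹ *ᵥ v) = v := by
  rw [mulVec_mulVec, mul_nonsing_inv _ ((isUnit_iff_isUnit_det P).mp hP.isUnit), one_mulVec]

lemma PosDef.inv_mulVec_mulVec (hP : P.PosDef) (v : ι → ℝ) : P⁻¹ *ᵥ (P *ᵥ v) = v := by
  rw [mulVec_mulVec, nonsing_inv_mul _ ((isUnit_iff_isUnit_det P).mp hP.isUnit), one_mulVec]

/-- `v ⬝ P⁻¹ v` is the supremum over `u` of `2 u ⬝ v - u ⬝ P u`, attained at `u = P⁻¹ v`. -/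
lemma PosDef.two_mul_dotProduct_sub_le (hP : P.PosDef) (u v : ι → ℝ) :
    2 * (u ⬝ᵥ v) - u ⬝ᵥ P *ᵥ u ≤ v ⬝ᵥ P⁻¹ *ᵥ v := by
  have h := hP.posSemidef.dotProduct_mulVec_nonneg (u - P⁻¹ *ᵥ v)
  have hcross : P⁻¹ *ᵥ v ⬝ᵥ P *ᵥ u = v ⬝ᵥ u := by
    rw [← hP.isHermitian.mulVec_dotProduct, hP.mulVec_inv_mulVec]
  simp only [star_trivial, mulVec_sub, hP.mulVec_inv_mulVec, dotProduct_sub, sub_dotProduct,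
    hcross] at h
  linarith [dotProduct_comm v u, dotProduct_comm (P⁻¹ *ᵥ v) v]

lemma PosDef.dotProduct_inv_mulVec_add (hP : P.PosDef) (u v : ι → ℝ) :
    (P *ᵥ u + v) ⬝ᵥ P⁻¹ *ᵥ (P *ᵥ u + v)
      = u ⬝ᵥ P *ᵥ u + 2 * (u ⬝ᵥ v) + v ⬝ᵥ P⁻¹ *ᵥ v := by
  have hcross : P *ᵥ u ⬝ᵥ P⁻¹ *ᵥ v = u ⬝ᵥ v := by
    rw [hP.isHermitian.mulVec_dotProduct, hP.mulVec_inv_mulVec]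
  rw [mulVec_add, hP.inv_mulVec_mulVec]
  simp only [add_dotProduct, dotProduct_add, hcross, hP.isHermitian.mulVec_dotProduct]
  rw [dotProduct_comm v u]
  ring

lemma PosDef.dotProduct_inv_mulVec_neg_add_smul {W : Matrix ι ι ℝ} (hW : W.PosDef)
    {x s xt st : ι → ℝ} (hx : W *ᵥ x = s) (hxt : W *ᵥ xt = st) (c : ℝ) :
    (-s + c • st) ⬝ᵥ W⁻¹ *ᵥ (-s + c • st)
      = x ⬝ᵥ s - 2 * c * (x ⬝ᵥ st) + c ^ 2 * (xt ⬝ᵥ st) := by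
  have hinv : W⁻¹ *ᵥ (-s + c • st) = -x + c • xt := by
    rw [← hx, ← hxt, mulVec_add, mulVec_neg, mulVec_smul, hW.inv_mulVec_mulVec,
      hW.inv_mulVec_mulVec]
  have hcross : s ⬝ᵥ xt = x ⬝ᵥ st := by
    rw [← hx, ← hxt, hW.isHermitian.mulVec_dotProduct]
  rw [hinv]
  simp only [add_dotProduct, dotProduct_add, neg_dotProduct, dotProduct_neg, smul_dotProduct,
    dotProduct_smul, smul_eq_mul, hcross, dotProduct_comm s x, dotProduct_comm st x,
    dotProduct_comm st xt]
  ring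

end Matrix

section LocalNorms

variable {n : ℕ}

lemma sq_vnorm {P : Matrix (Fin n) (Fin n) ℝ} (hP : P.PosSemidef) (v : Fin n → ℝ) :
    vnorm P v ^ 2 = v ⬝ᵥ P *ᵥ v :=
  Real.sq_sqrt (by simpa using hP.dotProduct_mulVec_nonneg v)

namespace Loewner

variable {P Q : Matrix (Fin n) (Fin n) ℝ}

lemma dotProduct_mulVec_le (h : Loewner P Q) (v : Fin n → ℝ) :
    v ⬝ᵥ P *ᵥ v ≤ v ⬝ᵥ Q *ᵥ v := by
  have := h.dotProduct_mulVec_nonneg v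
  simp only [star_trivial, sub_mulVec, dotProduct_sub] at this
  linarith

lemma dotProduct_inv_mulVec_le (h : Loewner P Q) (hP : P.PosDef) (hQ : Q.PosDef)
    (v : Fin n → ℝ) : v ⬝ᵥ Q⁻¹ *ᵥ v ≤ v ⬝ᵥ P⁻¹ *ᵥ v := by
  have hvar := hP.two_mul_dotProduct_sub_le (Q⁻¹ *ᵥ v) v
  have hPQ := h.dotProduct_mulVec_le (Q⁻¹ *ᵥ v)
  rw [hQ.mulVec_inv_mulVec] at hPQ
  linarith [dotProduct_comm (Q⁻¹ *ᵥ v) v]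

lemma smul_sq_vnorm_le {a : ℝ} {A : Matrix (Fin n) (Fin n) ℝ} (h : Loewner (a • A) P)
    (hA : A.PosSemidef) (v : Fin n → ℝ) : a * vnorm A v ^ 2 ≤ v ⬝ᵥ P *ᵥ v := by
  simpa [sq_vnorm hA, smul_mulVec] using h.dotProduct_mulVec_le v

lemma inv_smul_sq_vnorm_le {b : ℝ} {B : Matrix (Fin n) (Fin n) ℝ} (h : Loewner P (b • B⁻¹))
    (hP : P.PosDef) (hB : B.PosDef) (hb : 0 < b) (v : Fin n → ℝ) :
    b⁻¹ * vnorm B v ^ 2 ≤ v ⬝ᵥ P⁻¹ *ᵥ v := by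
  have hinv : (b • B⁻¹)⁻¹ = b⁻¹ • B := by
    refine inv_eq_left_inv ?_
    rw [smul_mul_smul_comm, inv_mul_cancel₀ hb.ne',
      mul_nonsing_inv _ ((isUnit_iff_isUnit_det B).mp hB.isUnit), one_smul]
  simpa [hinv, sq_vnorm hB.posSemidef, smul_mulVec] using
    h.dotProduct_inv_mulVec_le hP (hB.inv.smul hb) v

end Loewner

end LocalNorms

lemma two_mul_mul_le_sq_add_div {τ κ a b : ℝ} (h : 0 < τ * κ) :
    2 * (a * b) ≤ (τ * b + κ * a) ^ 2 / (2 * (τ * κ)) := by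
  rw [le_div_iff₀ (by positivity)]
  nlinarith [four_mul_le_sq_add (τ * b) (κ * a)]

lemma predictor_gamma_terms_le {ν β γ m t Xt : ℝ} (hβ : 0 < β) (hm : 0 < m) (hmt : β * m ≤ t)
    (hXt : β * m * Xt ≤ ν) :
    -2 * (γ * m) * ν + (γ * m) ^ 2 * Xt + (γ * m - t) ^ 2 / (2 * t)
      ≤ t / 2 + (2 * ν + 1) * m * (γ ^ 2 / (2 * β) - γ) := by
  have ht : 0 < t := by nlinarith
  have hXt' : (γ * m) ^ 2 * Xt ≤ γ ^ 2 * m * (ν / β) := by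
    have hmXt : m * Xt ≤ ν / β := by rw [le_div_iff₀ hβ]; linarith
    calc (γ * m) ^ 2 * Xt = γ ^ 2 * m * (m * Xt) := by ring
      _ ≤ γ ^ 2 * m * (ν / β) := by gcongr
  have hcomp : (γ * m - t) ^ 2 / (2 * t) ≤ t / 2 - γ * m + γ ^ 2 * m / (2 * β) := by
    have hsplit : (γ * m - t) ^ 2 / (2 * t) = t / 2 - γ * m + (γ * m) ^ 2 / (2 * t) := by
      field_simp; ring
    have hsq : (γ * m) ^ 2 / (2 * t) ≤ γ ^ 2 * m / (2 * β) := by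
      rw [div_le_div_iff₀ (by positivity) (by positivity)]
      nlinarith [mul_le_mul_of_nonneg_left hmt (by positivity : 0 ≤ 2 * γ ^ 2 * m)]
    linarith
  have he : (2 * ν + 1) * m * (γ ^ 2 / (2 * β) - γ)
      = -2 * (γ * m) * ν - γ * m + γ ^ 2 * m * (ν / β) + γ ^ 2 * m / (2 * β) := by
    field_simp; ring
  linarith

lemma predictor_scalar_bound {ν β γ μ m t : ℝ} (hν : 0 < ν) (hβ0 : 0 < β) (hβ1 : β ≤ 1)
    (hμ : 0 < μ) (hmμ : β * m ≤ μ) (hmt : β * m ≤ t) (hgap : (ν + 1) * m = ν * μ + t) :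
    ν * μ + t / 2 + (2 * ν + 1) * m * (γ ^ 2 / (2 * β) - γ)
      ≤ μ * (ν * (1 - 2 * γ + γ ^ 2 / β) + 1 - β / 2 + γ ^ 2 / (2 * β) - γ) / β := by
  set e := γ ^ 2 / (2 * β) - γ with he
  have he_ge : 0 ≤ e + β / 2 := by
    have : e + β / 2 = (γ - β) ^ 2 / (2 * β) := by rw [he]; field_simp; ring
    rw [this]; positivity
  have hθ : ν * (1 - 2 * γ + γ ^ 2 / β) + 1 - β / 2 + γ ^ 2 / (2 * β) - γ
      = ν + 1 - β / 2 + (2 * ν + 1) * e := by rw [he]; field_simp; ring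
  set d := (ν + 1) / 2 + (2 * ν + 1) * e with hd
  have hlhs : ν * μ + t / 2 + (2 * ν + 1) * m * e = ν * μ / 2 + m * d := by
    rw [hd]; linear_combination (-1 / 2 : ℝ) * hgap
  rw [hθ, hlhs, le_div_iff₀ hβ0]
  -- affine in `m`, which lies in `[ν μ / (ν + 1 - β), μ / β]`: the sign of the slope `d`
  -- decides which endpoint is the worst case
  rcases le_total 0 d with hd0 | hd0
  · have hmd := mul_le_mul_of_nonneg_right hmμ hd0
    nlinarith
  · have hpos : 0 < ν + 1 - β := by linarith
    have hmd := mul_le_mul_of_nonpos_right (by linarith : ν * μ ≤ (ν + 1 - β) * m) hd0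
    have hscalar : β * (ν + 1 - β) * (ν / 2) + β * ν * d
        ≤ (ν + 1 - β) * (ν + 1 - β / 2 + (2 * ν + 1) * e) := by
      have hcoef : 0 ≤ (1 - β) * (ν + 1) * (2 * ν + 1) :=
        mul_nonneg (mul_nonneg (by linarith) (by linarith)) (by linarith)
      rw [hd]
      nlinarith [sq_nonneg ((ν + 1) * (1 - β)), mul_nonneg hcoef he_ge]
    refine le_of_mul_le_mul_left ?_ hpos
    nlinarith [mul_le_mul_of_nonneg_left hscalar hμ.le, mul_le_mul_of_nonneg_left hmd hβ0.le]

theorem stmt9_general {n : ℕ}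
    (ν β γ : ℝ) (hν : 1 ≤ ν) (hβ0 : 0 < β) (hβ1 : β ≤ 1)
    (x s xt st Δx Δs : Fin n → ℝ) (τ κ Δτ Δκ : ℝ) (hτ : 0 < τ) (hκ : 0 < κ)
    (W : Matrix (Fin n) (Fin n) ℝ) (hWpd : W.PosDef)
    (hWx : W *ᵥ x = s) (hWxt : W *ᵥ xt = st) (hxst : x ⬝ᵥ st = ν)
    (μe : ℝ) (hμe : μe = (x ⬝ᵥ s + τ * κ) / (ν + 1))
    (hN1 : β * μe ≤ τ * κ) (hN2 : β * μe * (xt ⬝ᵥ st) ≤ ν)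
    (hdir1 : W *ᵥ Δx + Δs = -s + (γ * μe) • st)
    (hdir2 : τ * Δκ + κ * Δτ = -(τ * κ) + γ * μe)
    (hdir3 : Δx ⬝ᵥ Δs + Δτ * Δκ = 0)
    (θ : ℝ) (hθ : θ = ν * (1 - 2 * γ + γ ^ 2 / β) + 1 - β / 2 + γ ^ 2 / (2 * β) - γ)
    (μ : ℝ) (hμ : μ = x ⬝ᵥ s / ν) (hμpos : 0 < μ)
    (hNT : ν ^ 2 ≤ (x ⬝ᵥ s) * (xt ⬝ᵥ st))
    (A B : Matrix (Fin n) (Fin n) ℝ)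
    (hApd : A.PosDef) (hBpd : B.PosDef)
    (lP uD : ℝ) (huD : 0 < uD)
    (hlow : Loewner ((lP * μ) • A) W)
    (hupp : Loewner W ((uD / μ) • B⁻¹)) :
    lP * vnorm A Δx ^ 2 + (1 / uD) * vnorm B Δs ^ 2 ≤ θ / β := by
  have hν0 : 0 < ν := by linarith
  have hτκ : 0 < τ * κ := mul_pos hτ hκ
  have hxs : x ⬝ᵥ s = ν * μ := by rw [hμ]; field_simp
  have hgap : (ν + 1) * μe = ν * μ + τ * κ := by rw [hμe, hxs]; field_simp
  have hμe0 : 0 < μe := by nlinarith [mul_pos hν0 hμpos]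
  have hβμe : β * μe ≤ μ := by
    have hμxt : ν ≤ μ * (xt ⬝ᵥ st) := by
      rw [hxs, sq, mul_assoc] at hNT
      exact le_of_mul_le_mul_left hNT hν0
    nlinarith
  have hlocal : μ * (lP * vnorm A Δx ^ 2 + 1 / uD * vnorm B Δs ^ 2)
      ≤ Δx ⬝ᵥ W *ᵥ Δx + Δs ⬝ᵥ W⁻¹ *ᵥ Δs := by
    have hx := hlow.smul_sq_vnorm_le hApd.posSemidef Δx
    have hs := hupp.inv_smul_sq_vnorm_le hWpd hBpd (by positivity) Δs
    rw [inv_div] at hs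
    calc μ * (lP * vnorm A Δx ^ 2 + 1 / uD * vnorm B Δs ^ 2)
        = lP * μ * vnorm A Δx ^ 2 + μ / uD * vnorm B Δs ^ 2 := by ring
      _ ≤ _ := add_le_add hx hs
  have hsplit : Δx ⬝ᵥ W *ᵥ Δx + Δs ⬝ᵥ W⁻¹ *ᵥ Δs
      = x ⬝ᵥ s - 2 * (γ * μe) * ν + (γ * μe) ^ 2 * (xt ⬝ᵥ st) + 2 * (Δτ * Δκ) := by
    have := hWpd.dotProduct_inv_mulVec_add Δx Δs
    rw [hdir1, hWpd.dotProduct_inv_mulVec_neg_add_smul hWx hWxt, hxst] at this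
    linarith
  have hcomp : 2 * (Δτ * Δκ) ≤ (γ * μe - τ * κ) ^ 2 / (2 * (τ * κ)) := by
    have := two_mul_mul_le_sq_add_div (a := Δτ) (b := Δκ) hτκ
    rwa [hdir2, neg_add_eq_sub] at this
  have hγterms := predictor_gamma_terms_le (γ := γ) hβ0 hμe0 hN1 hN2
  have hgap_le := predictor_scalar_bound (γ := γ) hν0 hβ0 hβ1 hμpos hβμe hN1 hgap
  refine le_of_mul_le_mul_left ?_ hμpos
  rw [hθ, ← mul_div_assoc]
  linarith

/-- Predictor norm bound in the local norms: `lP ‖Δx‖_A² + (1/uD) ‖Δs‖_B² ≤ θ/β`. -/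
theorem stmt9 {n : ℕ}
    (ν β γ : ℝ) (hν : 1 ≤ ν) (hβ0 : 0 < β) (hβ1 : β ≤ 1)
    (x s xt st Δx Δs : Fin n → ℝ) (τ κ Δτ Δκ : ℝ) (hτ : 0 < τ) (hκ : 0 < κ)
    (W : Matrix (Fin n) (Fin n) ℝ) (hWsymm : W.IsSymm) (hWpd : W.PosDef)
    (hWx : W *ᵥ x = s) (hWxt : W *ᵥ xt = st) (hxst : x ⬝ᵥ st = ν)
    (μe : ℝ) (hμe : μe = (x ⬝ᵥ s + τ * κ) / (ν + 1))
    (hN1 : β * μe ≤ τ * κ) (hN2 : β * μe * (xt ⬝ᵥ st) ≤ ν)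
    (hdir1 : W *ᵥ Δx + Δs = -s + (γ * μe) • st)
    (hdir2 : τ * Δκ + κ * Δτ = -(τ * κ) + γ * μe)
    (hdir3 : Δx ⬝ᵥ Δs + Δτ * Δκ = 0)
    (θ : ℝ) (hθ : θ = ν * (1 - 2 * γ + γ ^ 2 / β) + 1 - β / 2 + γ ^ 2 / (2 * β) - γ)
    (μ : ℝ) (hμ : μ = x ⬝ᵥ s / ν) (hμpos : 0 < μ)
    (hNT : ν ^ 2 ≤ (x ⬝ᵥ s) * (xt ⬝ᵥ st))
    (A B : Matrix (Fin n) (Fin n) ℝ)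
    (hAsymm : A.IsSymm) (hApd : A.PosDef) (hBsymm : B.IsSymm) (hBpd : B.PosDef)
    (lP uD : ℝ) (hlP : 0 < lP) (huD : 0 < uD)
    (hlow : Loewner ((lP * μ) • A) W)
    (hupp : Loewner W ((uD / μ) • B⁻¹)) :
    lP * vnorm A Δx ^ 2 + (1 / uD) * vnorm B Δs ^ 2 ≤ θ / β :=
  stmt9_general ν β γ hν hβ0 hβ1 x s xt st Δx Δs τ κ Δτ Δκ hτ hκ W hWpd hWx hWxt hxst μe hμe hN1 hN2
    hdir1 hdir2 hdir3 θ hθ μ hμ hμpos hNT A B hApd hBpd lP uD huD hlow hupp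
end

section
/- In the predictor setting, |⟨Δx, Δs⟩| ≤ (1/2)·μᵉ·θ, where θ := ν·(1 − 2γ + γ²/β) + 1 − β/2 + γ²/(2β) − γ; if moreover ⟨x,s⟩·⟨x̃,s̃⟩ ≥ ν², then also |⟨Δx, Δs⟩| ≤ θ·μ/(2β). -/
open Matrix

/-!
Write `X = ⟨x,s⟩`, `Y = ⟨x̃,s̃⟩`, `T = τκ`. Since `WΔx + Δs = W(-x + γμᵉx̃)`, the
squared `W`-norm of `-x + γμᵉx̃` dominates `4⟨Δx,Δs⟩`, giving
`4⟨Δx,Δs⟩ ≤ X - 2γμᵉν + (γμᵉ)²Y`; AM–GM on `τΔκ + κΔτ = γμᵉ - T` gives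
`4ΔτΔκ·T ≤ (γμᵉ - T)²`. The neighbourhood conditions bound both right-hand sides by
`2μᵉθ`, and as `⟨Δx,Δs⟩ = -ΔτΔκ` this bounds `|⟨Δx,Δs⟩|`. The Nesterov–Todd inequality
`ν² ≤ XY` is Cauchy–Schwarz for the `W`-inner product, so it always holds; together with
`βμᵉY ≤ ν` it yields `βμᵉ ≤ μ`, which turns the first bound into the second.
-/

namespace Matrix.PosSemidef

variable {ι : Type*} [Fintype ι] {W : Matrix ι ι ℝ}

lemma dotProduct_mulVec_self_nonneg (hW : W.PosSemidef) (x : ι → ℝ) :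
    0 ≤ x ⬝ᵥ (W *ᵥ x) := by
  simpa using hW.dotProduct_mulVec_nonneg x

lemma dotProduct_mulVec_comm (hW : W.PosSemidef) (x y : ι → ℝ) :
    x ⬝ᵥ (W *ᵥ y) = y ⬝ᵥ (W *ᵥ x) := by
  have hWt : Wᵀ = W := isHermitian_iff_isSymm.mp hW.isHermitian
  simpa [hWt] using dotProduct_transpose_mulVec W x y

lemma sq_dotProduct_mulVec_le (hW : W.PosSemidef) (x y : ι → ℝ) :
    (x ⬝ᵥ (W *ᵥ y)) ^ 2 ≤ (x ⬝ᵥ (W *ᵥ x)) * (y ⬝ᵥ (W *ᵥ y)) := by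
  have hquad : ∀ t : ℝ,
      0 ≤ (y ⬝ᵥ (W *ᵥ y)) * (t * t) + 2 * (x ⬝ᵥ (W *ᵥ y)) * t + x ⬝ᵥ (W *ᵥ x) := by
    intro t
    have h := hW.dotProduct_mulVec_self_nonneg (x + t • y)
    simp only [mulVec_add, mulVec_smul, add_dotProduct, dotProduct_add, smul_dotProduct,
      dotProduct_smul, smul_eq_mul, hW.dotProduct_mulVec_comm y x] at h
    linarith
  have h := discrim_le_zero hquad
  rw [discrim] at h
  linarith

lemma four_mul_dotProduct_le (hW : W.PosSemidef) {u v z : ι → ℝ}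
    (h : W *ᵥ u + v = W *ᵥ z) : 4 * (u ⬝ᵥ v) ≤ z ⬝ᵥ (W *ᵥ z) := by
  have hv : v = W *ᵥ z - W *ᵥ u := eq_sub_of_add_eq' h
  -- the gap `zᵀWz - 4uᵀv` is the square `(z - 2u)ᵀW(z - 2u)`
  have h := hW.dotProduct_mulVec_self_nonneg (z - (2 : ℝ) • u)
  simp only [mulVec_sub, mulVec_smul, sub_dotProduct, dotProduct_sub, smul_dotProduct,
    dotProduct_smul, smul_eq_mul, hW.dotProduct_mulVec_comm z u] at h
  rw [hv, dotProduct_sub]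
  linarith

end Matrix.PosSemidef

noncomputable def predictorTheta (ν β γ : ℝ) : ℝ :=
  ν * (1 - 2 * γ + γ ^ 2 / β) + 1 - β / 2 + γ ^ 2 / (2 * β) - γ

section PredictorTheta

variable {ν β γ μe : ℝ}

lemma predictorTheta_eq (hβ : β ≠ 0) :
    predictorTheta ν β γ = (ν + 1 / 2) * ((γ - β) ^ 2 / β) + (ν + 1) * (1 - β) := by
  unfold predictorTheta
  field_simp
  ring

lemma predictorTheta_nonneg (hν : 0 ≤ ν) (hβ0 : 0 < β) (hβ1 : β ≤ 1) :
    0 ≤ predictorTheta ν β γ := by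
  rw [predictorTheta_eq hβ0.ne']
  exact add_nonneg (mul_nonneg (by linarith) (by positivity))
    (mul_nonneg (by linarith) (by linarith))

lemma four_mul_le_two_mul_predictorTheta_of_primal {X Y p : ℝ} (hν : 0 ≤ ν) (hβ0 : 0 < β)
    (hβ1 : β ≤ 1) (hμe : 0 ≤ μe) (hX : X ≤ (ν + 1 - β) * μe) (hY : β * μe * Y ≤ ν)
    (hp : 4 * p ≤ X - 2 * (γ * μe) * ν + (γ * μe) ^ 2 * Y) :
    4 * p ≤ 2 * μe * predictorTheta ν β γ := by
  have hYγ : (γ * μe) ^ 2 * Y ≤ γ ^ 2 * μe / β * ν := by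
    have h : (γ * μe) ^ 2 * Y = γ ^ 2 * μe / β * (β * μe * Y) := by field_simp
    rw [h]
    exact mul_le_mul_of_nonneg_left hY (by positivity)
  calc 4 * p ≤ X - 2 * (γ * μe) * ν + (γ * μe) ^ 2 * Y := hp
    _ ≤ (ν + 1 - β) * μe - 2 * (γ * μe) * ν + γ ^ 2 * μe / β * ν := by linarith
    _ = μe * (ν * ((γ - β) ^ 2 / β) + (ν + 1) * (1 - β)) := by field_simp; ring
    _ ≤ 2 * μe * predictorTheta ν β γ := by
      rw [predictorTheta_eq hβ0.ne']
      have h : 0 ≤ μe * ((ν + 1) * ((γ - β) ^ 2 / β + (1 - β))) := by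
        have : 0 ≤ 1 - β := by linarith
        positivity
      linarith

lemma four_mul_le_two_mul_predictorTheta_of_complementarity {T q : ℝ} (hν : 0 ≤ ν)
    (hβ0 : 0 < β) (hβ1 : β ≤ 1) (hμe : 0 ≤ μe) (hT : 0 < T)
    (hTle : T ≤ (ν + 1 - ν * β) * μe) (hβT : β * μe ≤ T)
    (hq : 4 * q * T ≤ (γ * μe - T) ^ 2) :
    4 * q ≤ 2 * μe * predictorTheta ν β γ := by
  have hγ : (γ * μe) ^ 2 ≤ γ ^ 2 * μe / β * T := by
    have h : (γ * μe) ^ 2 = γ ^ 2 * μe / β * (β * μe) := by field_simp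
    rw [h]
    exact mul_le_mul_of_nonneg_left hβT (by positivity)
  have hT2 : T ^ 2 ≤ T * ((ν + 1 - ν * β) * μe) := by
    rw [sq]; exact mul_le_mul_of_nonneg_left hTle hT.le
  refine le_of_mul_le_mul_right ?_ hT
  calc 4 * q * T ≤ (γ * μe) ^ 2 - 2 * (γ * μe) * T + T ^ 2 := by linarith
    _ ≤ γ ^ 2 * μe / β * T - 2 * (γ * μe) * T + T * ((ν + 1 - ν * β) * μe) := by linarith
    _ = μe * ((γ - β) ^ 2 / β + (ν + 1) * (1 - β)) * T := by field_simp; ring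
    _ ≤ 2 * μe * predictorTheta ν β γ * T := by
      rw [predictorTheta_eq hβ0.ne']
      have h : 0 ≤ μe * (2 * ν * ((γ - β) ^ 2 / β) + (ν + 1) * (1 - β)) * T := by
        have : 0 ≤ 1 - β := by linarith
        positivity
      linarith

lemma abs_le_half_mul_predictorTheta {X Y T p q : ℝ} (hν : 0 < ν) (hβ0 : 0 < β)
    (hβ1 : β ≤ 1) (hX : 0 ≤ X) (hT : 0 < T) (hsum : X + T = (ν + 1) * μe)
    (hβT : β * μe ≤ T) (hβY : β * μe * Y ≤ ν) (hXY : ν ^ 2 ≤ X * Y)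
    (hp : 4 * p ≤ X - 2 * (γ * μe) * ν + (γ * μe) ^ 2 * Y)
    (hq : 4 * q * T ≤ (γ * μe - T) ^ 2) (hpq : p + q = 0) :
    |p| ≤ 1 / 2 * μe * predictorTheta ν β γ ∧
      |p| ≤ predictorTheta ν β γ * (X / ν) / (2 * β) := by
  have hμe : 0 < μe := pos_of_mul_pos_right (a := ν + 1) (by linarith) (by linarith)
  have hβμeν : β * μe * ν ≤ X := by
    refine le_of_mul_le_mul_right ?_ hν
    nlinarith [mul_le_mul_of_nonneg_left hβY hX,
      mul_le_mul_of_nonneg_left hXY (by positivity : 0 ≤ β * μe)]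
  have h4p := four_mul_le_two_mul_predictorTheta_of_primal (γ := γ) hν.le hβ0 hβ1 hμe.le
    (by linarith) hβY hp
  have h4q := four_mul_le_two_mul_predictorTheta_of_complementarity (γ := γ) hν.le hβ0 hβ1
    hμe.le hT (by linarith) hβT hq
  have habs : |p| ≤ 1 / 2 * μe * predictorTheta ν β γ := abs_le.2 ⟨by linarith, by linarith⟩
  refine ⟨habs, habs.trans ?_⟩
  have hβμe : β * μe ≤ X / ν := by rwa [le_div_iff₀ hν]
  rw [le_div_iff₀ (by positivity)]
  nlinarith [mul_le_mul_of_nonneg_left hβμe (predictorTheta_nonneg (γ := γ) hν.le hβ0 hβ1)]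

end PredictorTheta

theorem stmt10_general {n : ℕ}
    (ν β γ : ℝ) (hν : 1 ≤ ν) (hβ0 : 0 < β) (hβ1 : β ≤ 1)
    (x s xt st Δx Δs : Fin n → ℝ) (τ κ Δτ Δκ : ℝ) (hτ : 0 < τ) (hκ : 0 < κ)
    (W : Matrix (Fin n) (Fin n) ℝ) (hWpd : W.PosDef)
    (hWx : W *ᵥ x = s) (hWxt : W *ᵥ xt = st) (hxst : x ⬝ᵥ st = ν)
    (μe : ℝ) (hμe : μe = (x ⬝ᵥ s + τ * κ) / (ν + 1))
    (hN1 : β * μe ≤ τ * κ) (hN2 : β * μe * (xt ⬝ᵥ st) ≤ ν)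
    (hdir1 : W *ᵥ Δx + Δs = -s + (γ * μe) • st)
    (hdir2 : τ * Δκ + κ * Δτ = -(τ * κ) + γ * μe)
    (hdir3 : Δx ⬝ᵥ Δs + Δτ * Δκ = 0)
    (θ : ℝ) (hθ : θ = ν * (1 - 2 * γ + γ ^ 2 / β) + 1 - β / 2 + γ ^ 2 / (2 * β) - γ)
    (μ : ℝ) (hμ : μ = x ⬝ᵥ s / ν) :
    |Δx ⬝ᵥ Δs| ≤ (1 / 2) * μe * θ ∧
    (ν ^ 2 ≤ (x ⬝ᵥ s) * (xt ⬝ᵥ st) → |Δx ⬝ᵥ Δs| ≤ θ * μ / (2 * β)) := by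
  subst hθ hμ
  have hW := hWpd.posSemidef
  have hxts : xt ⬝ᵥ s = ν := by rw [← hWx, hW.dotProduct_mulVec_comm, hWxt, hxst]
  have hXY : ν ^ 2 ≤ (x ⬝ᵥ s) * (xt ⬝ᵥ st) := by
    simpa only [hWx, hWxt, hxst] using hW.sq_dotProduct_mulVec_le x xt
  have hp : 4 * (Δx ⬝ᵥ Δs) ≤ x ⬝ᵥ s - 2 * (γ * μe) * ν + (γ * μe) ^ 2 * (xt ⬝ᵥ st) := by
    have h := hW.four_mul_dotProduct_le (z := -x + (γ * μe) • xt)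
      (by rw [hdir1, mulVec_add, mulVec_neg, mulVec_smul, hWx, hWxt])
    simp only [mulVec_add, mulVec_neg, mulVec_smul, hWx, hWxt, add_dotProduct, dotProduct_add,
      neg_dotProduct, dotProduct_neg, smul_dotProduct, dotProduct_smul, smul_eq_mul, hxst,
      hxts] at h
    linarith
  have hq : 4 * (Δτ * Δκ) * (τ * κ) ≤ (γ * μe - τ * κ) ^ 2 :=
    calc 4 * (Δτ * Δκ) * (τ * κ) = 4 * (τ * Δκ) * (κ * Δτ) := by ring
      _ ≤ (τ * Δκ + κ * Δτ) ^ 2 := four_mul_le_sq_add _ _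
      _ = (γ * μe - τ * κ) ^ 2 := by rw [hdir2]; ring
  have hsum : x ⬝ᵥ s + τ * κ = (ν + 1) * μe := by rw [hμe]; field_simp
  obtain ⟨hhalf, hβ⟩ := abs_le_half_mul_predictorTheta (by linarith) hβ0 hβ1
    (hWx ▸ hW.dotProduct_mulVec_self_nonneg x) (mul_pos hτ hκ) hsum hN1 hN2 hXY hp hq hdir3
  exact ⟨hhalf, fun _ => hβ⟩

/-- `|⟨Δx, Δs⟩| ≤ (1/2) μᵉ θ`, and under the Nesterov–Todd inequality also
`|⟨Δx, Δs⟩| ≤ θ μ / (2β)`. -/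
theorem stmt10 {n : ℕ}
    (ν β γ : ℝ) (hν : 1 ≤ ν) (hβ0 : 0 < β) (hβ1 : β ≤ 1)
    (x s xt st Δx Δs : Fin n → ℝ) (τ κ Δτ Δκ : ℝ) (hτ : 0 < τ) (hκ : 0 < κ)
    (W : Matrix (Fin n) (Fin n) ℝ) (hWsymm : W.IsSymm) (hWpd : W.PosDef)
    (hWx : W *ᵥ x = s) (hWxt : W *ᵥ xt = st) (hxst : x ⬝ᵥ st = ν)
    (μe : ℝ) (hμe : μe = (x ⬝ᵥ s + τ * κ) / (ν + 1))
    (hN1 : β * μe ≤ τ * κ) (hN2 : β * μe * (xt ⬝ᵥ st) ≤ ν)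
    (hdir1 : W *ᵥ Δx + Δs = -s + (γ * μe) • st)
    (hdir2 : τ * Δκ + κ * Δτ = -(τ * κ) + γ * μe)
    (hdir3 : Δx ⬝ᵥ Δs + Δτ * Δκ = 0)
    (θ : ℝ) (hθ : θ = ν * (1 - 2 * γ + γ ^ 2 / β) + 1 - β / 2 + γ ^ 2 / (2 * β) - γ)
    (μ : ℝ) (hμ : μ = x ⬝ᵥ s / ν) :
    |Δx ⬝ᵥ Δs| ≤ (1 / 2) * μe * θ ∧
    (ν ^ 2 ≤ (x ⬝ᵥ s) * (xt ⬝ᵥ st) → |Δx ⬝ᵥ Δs| ≤ θ * μ / (2 * β)) :=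
  stmt10_general ν β γ hν hβ0 hβ1 x s xt st Δx Δs τ κ Δτ Δκ hτ hκ W hWpd hWx hWxt hxst μe hμe hN1
    hN2 hdir1 hdir2 hdir3 θ hθ μ hμ
end

section
/- In the predictor setting, let 0 ≤ α ≤ 1 and set τ₊ := τ + α·Δτ, κ₊ := κ + α·Δκ, and θ := ν·(1 − 2γ + γ²/β) + 1 − β/2 + γ²/(2β) − γ. Then τ₊·κ₊ ≥ μᵉ·(β·(1 − α) + α·γ − (1/2)·α²·θ). Moreover, if β < 1 or γ < 1, and 0 ≤ α < (γ − β + √((β − γ)² + 2·β·θ))/θ, then τ₊ > 0 and κ₊ > 0. -/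
open Matrix

/-!
Since `τ₊ κ₊ = (1 - α) τ κ + α γ μᵉ - α² ⟨Δx, Δs⟩`, the lower bound follows from `τ κ ≥ β μᵉ`
and `⟨Δx, Δs⟩ ≤ μᵉ θ / 2`. For the latter, put `z := γ μᵉ x̃ - x`: the first direction equation
says `Δs = W (z - Δx)`, so `⟨Δx, Δs⟩ ≤ ⟨z, W z⟩ / 4` by completing the square, and the neighborhood
assumptions bound `⟨z, W z⟩`.

For `α` below the positive root of the quadratic, the lower bound is positive at every step
`a ∈ [0, α]`, so neither `τ + a Δτ` nor `κ + a Δκ` vanishes on `[0, α]`; both start positive.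
-/

lemma Matrix.PosSemidef.dotProduct_mulVec_comm_s12 {ι : Type*} [Fintype ι]
    {W : Matrix ι ι ℝ} (hW : W.PosSemidef) (u v : ι → ℝ) :
    u ⬝ᵥ (W *ᵥ v) = v ⬝ᵥ (W *ᵥ u) := by
  rw [dotProduct_mulVec, ← mulVec_transpose, isHermitian_iff_isSymm.mp hW.isHermitian,
    dotProduct_comm]

/-- Completing the square `(z - 2u)ᵀ W (z - 2u) ≥ 0`. -/
lemma Matrix.PosSemidef.dotProduct_mulVec_sub_le {ι : Type*} [Fintype ι]
    {W : Matrix ι ι ℝ} (hW : W.PosSemidef) (u z : ι → ℝ) :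
    u ⬝ᵥ (W *ᵥ (z - u)) ≤ z ⬝ᵥ (W *ᵥ z) / 4 := by
  have hsymm := hW.dotProduct_mulVec_comm_s12 z u
  have hsq := hW.dotProduct_mulVec_nonneg (z - (2 : ℝ) • u)
  simp only [star_trivial, mulVec_sub, mulVec_smul, dotProduct_sub, sub_dotProduct,
    dotProduct_smul, smul_dotProduct, smul_eq_mul] at hsq ⊢
  linarith

lemma sq_one_sub_le_one_sub_two_mul_add_sq_div {β γ : ℝ} (hβ0 : 0 < β) (hβ1 : β ≤ 1) :
    (1 - γ) ^ 2 ≤ 1 - 2 * γ + γ ^ 2 / β := by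
  have : γ ^ 2 ≤ γ ^ 2 / β := le_div_self (sq_nonneg γ) hβ0 hβ1
  linarith [show (1 - γ) ^ 2 = 1 - 2 * γ + γ ^ 2 by ring]

/-- `θ ≥ (ν + 1/2)(1 - γ)² + (1 - β)/2`. -/
lemma predictor_theta_pos {ν β γ : ℝ} (hν : 1 ≤ ν) (hβ0 : 0 < β) (hβ1 : β ≤ 1)
    (hβγ : β < 1 ∨ γ < 1) :
    0 < ν * (1 - 2 * γ + γ ^ 2 / β) + 1 - β / 2 + γ ^ 2 / (2 * β) - γ := by
  have hsq := sq_one_sub_le_one_sub_two_mul_add_sq_div (γ := γ) hβ0 hβ1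
  have hν_mul : ν * (1 - γ) ^ 2 ≤ ν * (1 - 2 * γ + γ ^ 2 / β) :=
    mul_le_mul_of_nonneg_left hsq (by linarith)
  have hsplit : 1 - β / 2 + γ ^ 2 / (2 * β) - γ = (1 - 2 * γ + γ ^ 2 / β) / 2 + (1 - β) / 2 := by
    field_simp; ring
  rcases hβγ with hβ | hγ
  · nlinarith [sq_nonneg (1 - γ)]
  · nlinarith [pow_pos (sub_pos.mpr hγ) 2]

/-- With `r := √(b² + 2cp) > |b|`: `(r + b - p a) (r - b + p a) = 2p (c + b a - p a² / 2)`. -/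
lemma add_mul_sub_sq_pos_of_mul_lt {b c p a : ℝ} (hc : 0 < c) (hp : 0 < p) (ha : 0 ≤ a)
    (h : p * a < b + √(b ^ 2 + 2 * c * p)) :
    0 < c + b * a - p / 2 * a ^ 2 := by
  set r := √(b ^ 2 + 2 * c * p)
  have hr2 : r ^ 2 = b ^ 2 + 2 * c * p := Real.sq_sqrt (by positivity)
  have hr : |b| < r := by
    rw [← Real.sqrt_sq_eq_abs]
    exact Real.sqrt_lt_sqrt (sq_nonneg b) (by nlinarith [mul_pos hc hp])
  have f₁ : 0 < r + b - p * a := by linarith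
  have f₂ : 0 < r - b + p * a := by nlinarith [neg_abs_le b, mul_nonneg hp.le ha]
  nlinarith [mul_pos f₁ f₂]

lemma pos_of_forall_add_mul_ne_zero {τ Δτ α : ℝ} (hτ : 0 < τ) (hα : 0 ≤ α)
    (h : ∀ a ∈ Set.Icc 0 α, τ + a * Δτ ≠ 0) : 0 < τ + α * Δτ := by
  by_contra! hle
  have hΔτ : Δτ < 0 := by
    by_contra! hΔτ
    nlinarith [mul_nonneg hα hΔτ]
  have hneg : 0 < -Δτ := neg_pos.mpr hΔτ
  refine h (τ / -Δτ) ⟨(div_pos hτ hneg).le, ?_⟩ ?_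
  · rw [div_le_iff₀ hneg]; linarith
  · field_simp [hΔτ.ne]; ring

lemma predictor_dotProduct_le {ι : Type*} [Fintype ι] {ν β γ μe τ κ : ℝ}
    {x s xt st Δx Δs : ι → ℝ} {W : Matrix ι ι ℝ} (hν : 1 ≤ ν) (hβ0 : 0 < β) (hβ1 : β ≤ 1)
    (hW : W.PosSemidef) (hWx : W *ᵥ x = s) (hWxt : W *ᵥ xt = st) (hxst : x ⬝ᵥ st = ν)
    (hμ : 0 < μe) (hμe : x ⬝ᵥ s + τ * κ = (ν + 1) * μe)
    (hN1 : β * μe ≤ τ * κ) (hN2 : β * μe * (xt ⬝ᵥ st) ≤ ν)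
    (hdir1 : W *ᵥ Δx + Δs = -s + (γ * μe) • st) :
    Δx ⬝ᵥ Δs ≤ μe / 2 * (ν * (1 - 2 * γ + γ ^ 2 / β) + 1 - β / 2 + γ ^ 2 / (2 * β) - γ) := by
  set z := (γ * μe) • xt - x
  have hWz : W *ᵥ z = (γ * μe) • st - s := by
    rw [mulVec_sub, mulVec_smul, hWx, hWxt]
  have hΔs : Δs = W *ᵥ (z - Δx) := by
    rw [mulVec_sub, hWz, eq_sub_of_add_eq' hdir1]
    abel
  have hxts : xt ⬝ᵥ s = ν := by
    rw [← hWx, hW.dotProduct_mulVec_comm_s12, hWxt, hxst]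
  have hzWz : z ⬝ᵥ (W *ᵥ z) = γ ^ 2 * μe ^ 2 * (xt ⬝ᵥ st) - 2 * γ * μe * ν + x ⬝ᵥ s := by
    simp only [z, hWz, dotProduct_sub, sub_dotProduct, dotProduct_smul, smul_dotProduct,
      smul_eq_mul, hxst, hxts]
    ring
  have hquad : γ ^ 2 * μe ^ 2 * (xt ⬝ᵥ st) ≤ γ ^ 2 / β * μe * ν := by
    calc γ ^ 2 * μe ^ 2 * (xt ⬝ᵥ st) = γ ^ 2 / β * μe * (β * μe * (xt ⬝ᵥ st)) := by
          field_simp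
      _ ≤ γ ^ 2 / β * μe * ν := by gcongr
  have hsq := sq_one_sub_le_one_sub_two_mul_add_sq_div (γ := γ) hβ0 hβ1
  have hslack : 0 ≤ μe * ((ν + 1) * (1 - 2 * γ + γ ^ 2 / β)) := by
    have : 0 ≤ 1 - 2 * γ + γ ^ 2 / β := (sq_nonneg _).trans hsq
    positivity
  have hhalf : γ ^ 2 / (2 * β) = γ ^ 2 / β / 2 := by ring
  have := hW.dotProduct_mulVec_sub_le Δx z
  rw [← hΔs, hzWz] at this
  nlinarith

lemma predictor_tau_mul_kappa_ge {β γ μe θ τ κ Δτ Δκ p a : ℝ} (hN1 : β * μe ≤ τ * κ)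
    (hdir2 : τ * Δκ + κ * Δτ = -(τ * κ) + γ * μe) (hdir3 : p + Δτ * Δκ = 0)
    (hp : p ≤ μe / 2 * θ) (ha1 : a ≤ 1) :
    μe * (β * (1 - a) + a * γ - (1 / 2) * a ^ 2 * θ) ≤ (τ + a * Δτ) * (κ + a * Δκ) := by
  have hprod : (τ + a * Δτ) * (κ + a * Δκ) = (1 - a) * (τ * κ) + a * (γ * μe) - a ^ 2 * p := by
    linear_combination a * hdir2 + a ^ 2 * hdir3
  nlinarith [mul_nonneg (sub_nonneg.mpr ha1) (sub_nonneg.mpr hN1),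
    mul_nonneg (sq_nonneg a) (sub_nonneg.mpr hp)]

theorem stmt12_general {n : ℕ}
    (ν β γ : ℝ) (hν : 1 ≤ ν) (hβ0 : 0 < β) (hβ1 : β ≤ 1)
    (x s xt st Δx Δs : Fin n → ℝ) (τ κ Δτ Δκ : ℝ) (hτ : 0 < τ) (hκ : 0 < κ)
    (W : Matrix (Fin n) (Fin n) ℝ) (hWpd : W.PosDef)
    (hWx : W *ᵥ x = s) (hWxt : W *ᵥ xt = st) (hxst : x ⬝ᵥ st = ν)
    (μe : ℝ) (hμe : μe = (x ⬝ᵥ s + τ * κ) / (ν + 1))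
    (hN1 : β * μe ≤ τ * κ) (hN2 : β * μe * (xt ⬝ᵥ st) ≤ ν)
    (hdir1 : W *ᵥ Δx + Δs = -s + (γ * μe) • st)
    (hdir2 : τ * Δκ + κ * Δτ = -(τ * κ) + γ * μe)
    (hdir3 : Δx ⬝ᵥ Δs + Δτ * Δκ = 0)
    (θ : ℝ) (hθ : θ = ν * (1 - 2 * γ + γ ^ 2 / β) + 1 - β / 2 + γ ^ 2 / (2 * β) - γ)
    (α : ℝ) (hα0 : 0 ≤ α) (hα1 : α ≤ 1) :
    μe * (β * (1 - α) + α * γ - (1 / 2) * α ^ 2 * θ) ≤ (τ + α * Δτ) * (κ + α * Δκ) ∧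
    ((β < 1 ∨ γ < 1) →
      α < (γ - β + Real.sqrt ((β - γ) ^ 2 + 2 * β * θ)) / θ →
      0 < τ + α * Δτ ∧ 0 < κ + α * Δκ) := by
  have hW := hWpd.posSemidef
  have hxs : 0 ≤ x ⬝ᵥ s := by simpa [← hWx] using hW.dotProduct_mulVec_nonneg x
  have hμ : 0 < μe := hμe ▸ div_pos (by positivity) (by linarith)
  have hμe' : x ⬝ᵥ s + τ * κ = (ν + 1) * μe := by rw [hμe]; field_simp
  have hdot := hθ ▸ predictor_dotProduct_le hν hβ0 hβ1 hW hWx hWxt hxst hμ hμe' hN1 hN2 hdir1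
  have hlower (a : ℝ) (ha1 : a ≤ 1) := predictor_tau_mul_kappa_ge hN1 hdir2 hdir3 hdot ha1
  refine ⟨hlower α hα1, fun hβγ hαθ => ?_⟩
  have hθ0 : 0 < θ := hθ ▸ predictor_theta_pos hν hβ0 hβ1 hβγ
  have hne (a : ℝ) (ha : a ∈ Set.Icc 0 α) : (τ + a * Δτ) * (κ + a * Δκ) ≠ 0 := by
    refine (lt_of_lt_of_le (mul_pos hμ ?_) (hlower a (ha.2.trans hα1))).ne'
    have hroot : θ * a < (γ - β) + √((γ - β) ^ 2 + 2 * β * θ) := by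
      rw [lt_div_iff₀ hθ0] at hαθ
      rw [sub_sq_comm γ β]
      linarith [mul_le_mul_of_nonneg_left ha.2 hθ0.le]
    linarith [add_mul_sub_sq_pos_of_mul_lt hβ0 hθ0 ha.1 hroot]
  exact ⟨pos_of_forall_add_mul_ne_zero hτ hα0 fun a ha => left_ne_zero_of_mul (hne a ha),
    pos_of_forall_add_mul_ne_zero hκ hα0 fun a ha => right_ne_zero_of_mul (hne a ha)⟩

/-- Lower bound on `τ₊ κ₊` after a predictor step, and positivity of `τ₊, κ₊`
for small enough step sizes. -/
theorem stmt12 {n : ℕ}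
    (ν β γ : ℝ) (hν : 1 ≤ ν) (hβ0 : 0 < β) (hβ1 : β ≤ 1)
    (x s xt st Δx Δs : Fin n → ℝ) (τ κ Δτ Δκ : ℝ) (hτ : 0 < τ) (hκ : 0 < κ)
    (W : Matrix (Fin n) (Fin n) ℝ) (hWsymm : W.IsSymm) (hWpd : W.PosDef)
    (hWx : W *ᵥ x = s) (hWxt : W *ᵥ xt = st) (hxst : x ⬝ᵥ st = ν)
    (μe : ℝ) (hμe : μe = (x ⬝ᵥ s + τ * κ) / (ν + 1))
    (hN1 : β * μe ≤ τ * κ) (hN2 : β * μe * (xt ⬝ᵥ st) ≤ ν)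
    (hdir1 : W *ᵥ Δx + Δs = -s + (γ * μe) • st)
    (hdir2 : τ * Δκ + κ * Δτ = -(τ * κ) + γ * μe)
    (hdir3 : Δx ⬝ᵥ Δs + Δτ * Δκ = 0)
    (θ : ℝ) (hθ : θ = ν * (1 - 2 * γ + γ ^ 2 / β) + 1 - β / 2 + γ ^ 2 / (2 * β) - γ)
    (α : ℝ) (hα0 : 0 ≤ α) (hα1 : α ≤ 1) :
    μe * (β * (1 - α) + α * γ - (1 / 2) * α ^ 2 * θ) ≤ (τ + α * Δτ) * (κ + α * Δκ) ∧
    ((β < 1 ∨ γ < 1) →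
      α < (γ - β + Real.sqrt ((β - γ) ^ 2 + 2 * β * θ)) / θ →
      0 < τ + α * Δτ ∧ 0 < κ + α * Δκ) :=
  stmt12_general ν β γ hν hβ0 hβ1 x s xt st Δx Δs τ κ Δτ Δκ hτ hκ W hWpd hWx hWxt hxst μe hμe hN1
    hN2 hdir1 hdir2 hdir3 θ hθ α hα0 hα1
end

section
/- Suppose x₊, s₊, x̃₊, s̃₊ ∈ ℝⁿ, ν ≥ 1, τ₊, κ₊ > 0, W₊ is a symmetric positive definite n×n matrix with W₊·x₊ = s₊ and W₊·x̃₊ = s̃₊, μ₊ := ⟨x₊, s₊⟩/ν, and δP₊ := x₊ − μ₊·x̃₊. Suppose Δx, Δs ∈ ℝⁿ and Δτ, Δκ ∈ ℝ satisfy W₊·Δx + Δs = μ₊·s̃₊ − s₊, τ₊·Δκ + κ₊·Δτ = 0, and ⟨Δx, Δs⟩ + Δτ·Δκ = 0. Then ‖Δx‖_{W₊}² + (‖Δs‖_{W₊}*)² ≤ ‖δP₊‖_{W₊}², and |⟨Δx, Δs⟩| ≤ (1/2)·‖δP₊‖_{W₊}², where ‖v‖_{W₊} := √(vᵀW₊v)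 and ‖v‖_{W₊}* := ‖v‖_{W₊⁻¹}. -/
open Matrix

lemma quad_nonneg {n : ℕ} {M : Matrix (Fin n) (Fin n) ℝ} (hM : M.PosSemidef)
    (v : Fin n → ℝ) : 0 ≤ v ⬝ᵥ (M *ᵥ v) := by
  simpa using hM.re_dotProduct_nonneg v

lemma vnorm_sq {n : ℕ} {M : Matrix (Fin n) (Fin n) ℝ} (hM : M.PosSemidef)
    (v : Fin n → ℝ) : vnorm M v ^ 2 = v ⬝ᵥ (M *ᵥ v) := by
  rw [vnorm, Real.sq_sqrt (quad_nonneg hM v)]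

/-- Corrector norm bounds: `‖Δx‖_{W₊}² + (‖Δs‖_{W₊}*)² ≤ ‖δP₊‖_{W₊}²` and
`|⟨Δx, Δs⟩| ≤ (1/2) ‖δP₊‖_{W₊}²`. -/
theorem stmt15 {n : ℕ} (ν : ℝ) (hν : 1 ≤ ν)
    (xp sp xtp stp Δx Δs : Fin n → ℝ) (τp κp Δτ Δκ : ℝ) (hτ : 0 < τp) (hκ : 0 < κp)
    (Wp : Matrix (Fin n) (Fin n) ℝ) (hWsymm : Wp.IsSymm) (hWpd : Wp.PosDef)
    (hWx : Wp *ᵥ xp = sp) (hWxt : Wp *ᵥ xtp = stp)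
    (μp : ℝ) (hμp : μp = xp ⬝ᵥ sp / ν)
    (δPp : Fin n → ℝ) (hδPp : δPp = xp - μp • xtp)
    (hdir1 : Wp *ᵥ Δx + Δs = μp • stp - sp)
    (hdir2 : τp * Δκ + κp * Δτ = 0)
    (hdir3 : Δx ⬝ᵥ Δs + Δτ * Δκ = 0) :
    vnorm Wp Δx ^ 2 + vnorm Wp⁻¹ Δs ^ 2 ≤ vnorm Wp δPp ^ 2 ∧
    |Δx ⬝ᵥ Δs| ≤ (1 / 2) * vnorm Wp δPp ^ 2 := by
  have hdet : IsUnit Wp.det := isUnit_iff_ne_zero.mpr hWpd.det_pos.ne'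
  set y : Fin n → ℝ := -δPp - Δx with hy
  have hΔs : Δs = Wp *ᵥ y := by
    have h1 : Wp *ᵥ Δx + Δs = Wp *ᵥ (μp • xtp - xp) := by
      rw [hdir1, mulVec_sub, mulVec_smul, hWx, hWxt]
    have : Δs = Wp *ᵥ (μp • xtp - xp) - Wp *ᵥ Δx := by
      rw [← h1]; abel
    rw [this, hy, hδPp, ← mulVec_sub]
    congr 1
    abel
  have key : Δx ⬝ᵥ (Wp *ᵥ Δx) + Δs ⬝ᵥ (Wp⁻¹ *ᵥ Δs) + 2 * (Δx ⬝ᵥ Δs)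
      = δPp ⬝ᵥ (Wp *ᵥ δPp) := by
    have hb : Δs ⬝ᵥ (Wp⁻¹ *ᵥ Δs) = y ⬝ᵥ (Wp *ᵥ y) := by
      rw [hΔs, mulVec_mulVec, Matrix.nonsing_inv_mul Wp hdet, one_mulVec,
        dotProduct_comm]
    have hxs : Δx ⬝ᵥ Δs = Δx ⬝ᵥ (Wp *ᵥ y) := by rw [hΔs]
    have hsymm : y ⬝ᵥ (Wp *ᵥ Δx) = Δx ⬝ᵥ (Wp *ᵥ y) := by
      rw [dotProduct_mulVec, ← mulVec_transpose, hWsymm.eq, dotProduct_comm]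
    have hδ : δPp = -(Δx + y) := by rw [hy]; abel
    rw [hb, hxs, hδ]
    simp only [mulVec_neg, mulVec_add, dotProduct_neg, neg_dotProduct, neg_neg,
      dotProduct_add, add_dotProduct]
    rw [hsymm]
    ring
  have h2 : (τp * Δκ + κp * Δτ) * Δτ = 0 := by rw [hdir2]; ring
  have hxsnn : 0 ≤ Δx ⬝ᵥ Δs := by nlinarith [sq_nonneg Δτ]
  have ha := quad_nonneg hWpd.posSemidef Δx
  have hbnn := quad_nonneg hWpd.inv.posSemidef Δs
  rw [vnorm_sq hWpd.posSemidef, vnorm_sq hWpd.inv.posSemidef,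
    vnorm_sq hWpd.posSemidef]
  constructor
  · linarith
  · rw [abs_of_nonneg hxsnn]; linarith
end
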